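/- Let K be a parallelogram-based pyramid split into tetrahedra T₁, T₂ and let V(K) be the space of vector fields v ∈ H(div,K) with v|_{T_ℓ} ∈ {a + c x : a∈ℝ³, c∈ℝ} for ℓ=1,2, normal component continuous across the interface triangle, and v·n constant on each of the five faces of K. Then dim V(K) = 6. -/
import Mathlib


open Matrix

/-- An `RT₀` field `x ↦ a + c • x` given by the pair `(a, c)`. -/
noncomputable def rtFld (p : (Fin 3 → ℝ) × ℝ) (x : Fin 3 → ℝ) : Fin 3 → ℝ :=
  p.1 + p.2 • x

/-- `n` is normal to the (affine hull of the) set `S`. -/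
def normalTo (S : Set (Fin 3 → ℝ)) (n : Fin 3 → ℝ) : Prop :=
  ∀ x ∈ S, ∀ y ∈ S, n ⬝ᵥ (x - y) = 0

/-- Membership in the composite space `V(K)`: the pair `q = (q.1, q.2)` encodes the
`RT₀` pieces on `T₁ = conv{v₃,v₁,v₂,v₅}` and `T₂ = conv{v₁,v₃,v₄,v₅}`; the normal
component is continuous across the interface triangle `conv{v₁,v₃,v₅}` and is
constant on each of the five faces of `K`. -/
noncomputable def memVK (v : Fin 5 → Fin 3 → ℝ)
    (q : ((Fin 3 → ℝ) × ℝ) × ((Fin 3 → ℝ) × ℝ)) : Prop :=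
  -- normal continuity across the interface triangle
  (∀ n, normalTo (convexHull ℝ {v 0, v 2, v 4}) n →
    ∀ x ∈ convexHull ℝ {v 0, v 2, v 4}, rtFld q.1 x ⬝ᵥ n = rtFld q.2 x ⬝ᵥ n) ∧
  -- constant normal component on the four triangular faces
  (∀ n, normalTo (convexHull ℝ {v 0, v 1, v 4}) n →
    ∃ k, ∀ x ∈ convexHull ℝ {v 0, v 1, v 4}, rtFld q.1 x ⬝ᵥ n = k) ∧
  (∀ n, normalTo (convexHull ℝ {v 1, v 2, v 4}) n →
    ∃ k, ∀ x ∈ convexHull ℝ {v 1, v 2, v 4}, rtFld q.1 x ⬝ᵥ n = k) ∧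
  (∀ n, normalTo (convexHull ℝ {v 2, v 3, v 4}) n →
    ∃ k, ∀ x ∈ convexHull ℝ {v 2, v 3, v 4}, rtFld q.2 x ⬝ᵥ n = k) ∧
  (∀ n, normalTo (convexHull ℝ {v 0, v 3, v 4}) n →
    ∃ k, ∀ x ∈ convexHull ℝ {v 0, v 3, v 4}, rtFld q.2 x ⬝ᵥ n = k) ∧
  -- constant normal component on the parallelogram base
  (∀ n, normalTo (convexHull ℝ {v 0, v 1, v 2, v 3}) n →
    ∃ k, (∀ x ∈ convexHull ℝ {v 0, v 1, v 2}, rtFld q.1 x ⬝ᵥ n = k) ∧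
         (∀ x ∈ convexHull ℝ {v 0, v 2, v 3}, rtFld q.2 x ⬝ᵥ n = k))

noncomputable def crossP (x y : Fin 3 → ℝ) : Fin 3 → ℝ :=
  ![x 1 * y 2 - x 2 * y 1, x 2 * y 0 - x 0 * y 2, x 0 * y 1 - x 1 * y 0]

lemma tripleKey (u b a w : Fin 3 → ℝ) (h1 : w ⬝ᵥ crossP u a = 0) (h2 : w ⬝ᵥ crossP u b = 0) :
    (u ⬝ᵥ crossP b a) • w = (w ⬝ᵥ crossP b a) • u := by
  simp only [crossP, dotProduct, Fin.sum_univ_three, Matrix.cons_val_zero, Matrix.cons_val_one,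
    Matrix.head_cons, Matrix.cons_val_two, Matrix.tail_cons] at h1 h2 ⊢
  have e0 : (u 0 * (b 1 * a 2 - b 2 * a 1) + u 1 * (b 2 * a 0 - b 0 * a 2) +
      u 2 * (b 0 * a 1 - b 1 * a 0)) * w 0 =
      (w 0 * (b 1 * a 2 - b 2 * a 1) + w 1 * (b 2 * a 0 - b 0 * a 2) +
      w 2 * (b 0 * a 1 - b 1 * a 0)) * u 0 := by
    linear_combination (-(b 0)) * h1 + (a 0) * h2
  have e1 : (u 0 * (b 1 * a 2 - b 2 * a 1) + u 1 * (b 2 * a 0 - b 0 * a 2) +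
      u 2 * (b 0 * a 1 - b 1 * a 0)) * w 1 =
      (w 0 * (b 1 * a 2 - b 2 * a 1) + w 1 * (b 2 * a 0 - b 0 * a 2) +
      w 2 * (b 0 * a 1 - b 1 * a 0)) * u 1 := by
    linear_combination (-(b 1)) * h1 + (a 1) * h2
  have e2 : (u 0 * (b 1 * a 2 - b 2 * a 1) + u 1 * (b 2 * a 0 - b 0 * a 2) +
      u 2 * (b 0 * a 1 - b 1 * a 0)) * w 2 =
      (w 0 * (b 1 * a 2 - b 2 * a 1) + w 1 * (b 2 * a 0 - b 0 * a 2) +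
      w 2 * (b 0 * a 1 - b 1 * a 0)) * u 2 := by
    linear_combination (-(b 2)) * h1 + (a 2) * h2
  funext i
  fin_cases i <;> simp only [Pi.smul_apply, smul_eq_mul] <;> [exact e0; exact e1; exact e2]

lemma normalTo_hull {n p₀ : Fin 3 → ℝ} {S : Set (Fin 3 → ℝ)}
    (h : ∀ p ∈ S, n ⬝ᵥ (p - p₀) = 0) : normalTo (convexHull ℝ S) n := by
  have hlin : IsLinearMap ℝ (fun x : Fin 3 → ℝ => n ⬝ᵥ x) :=
    ⟨fun x y => dotProduct_add n x y, fun c x => by simp [dotProduct_smul]⟩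
  have hsub : convexHull ℝ S ⊆ {x | n ⬝ᵥ x = n ⬝ᵥ p₀} := by
    apply convexHull_min
    · intro p hp
      have := h p hp
      rw [dotProduct_sub] at this
      simpa [Set.mem_setOf_eq] using sub_eq_zero.mp this
    · exact convex_hyperplane hlin _
  intro x hx y hy
  have hx' := hsub hx
  have hy' := hsub hy
  simp only [Set.mem_setOf_eq] at hx' hy'
  rw [dotProduct_sub, hx', hy', sub_self]

/-- the normal component of an RT₀ field is constant on a planar set -/
lemma rt_eq (q : (Fin 3 → ℝ) × ℝ) {n p₀ x : Fin 3 → ℝ} {S : Set (Fin 3 → ℝ)}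
    (hn : normalTo S n) (hp₀ : p₀ ∈ S) (hx : x ∈ S) :
    rtFld q x ⬝ᵥ n = rtFld q p₀ ⬝ᵥ n := by
  have h := hn x hx p₀ hp₀
  rw [dotProduct_sub] at h
  have hx0 : x ⬝ᵥ n = p₀ ⬝ᵥ n := by
    rw [dotProduct_comm x n, dotProduct_comm p₀ n]; linarith
  simp [rtFld, add_dotProduct, smul_dotProduct, hx0]

noncomputable def psiV (v : Fin 5 → Fin 3 → ℝ) :
    Fin 6 → ((Fin 3 → ℝ) × ℝ) × ((Fin 3 → ℝ) × ℝ) :=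
  ![ ((![1,0,0], 0), (![1,0,0], 0)),
     ((![0,1,0], 0), (![0,1,0], 0)),
     ((![0,0,1], 0), (![0,0,1], 0)),
     ((0, 1), (0, 1)),
     ((v 2 - v 0, 0), (0, 0)),
     ((-(v 0), 1), (0, 0)) ]

lemma sum_psiV (v : Fin 5 → Fin 3 → ℝ) (c : Fin 6 → ℝ) :
    ∑ i, c i • psiV v i =
      ((![c 0, c 1, c 2] + c 4 • (v 2 - v 0) - c 5 • v 0, c 3 + c 5),
       (![c 0, c 1, c 2], c 3)) := by
  have e0 : psiV v 0 = ((![1,0,0], 0), (![1,0,0], 0)) := rfl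
  have e1 : psiV v 1 = ((![0,1,0], 0), (![0,1,0], 0)) := rfl
  have e2 : psiV v 2 = ((![0,0,1], 0), (![0,0,1], 0)) := rfl
  have e3 : psiV v 3 = ((0, 1), (0, 1)) := rfl
  have e4 : psiV v 4 = ((v 2 - v 0, 0), (0, 0)) := rfl
  have e5 : psiV v 5 = ((-(v 0), 1), (0, 0)) := rfl
  rw [Fin.sum_univ_six, e0, e1, e2, e3, e4, e5]
  simp only [Prod.smul_mk, Prod.mk_add_mk, Prod.mk.injEq, smul_zero, smul_eq_mul]
  refine ⟨⟨?_, by ring⟩, ?_, by ring⟩ <;>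
    · funext j
      fin_cases j <;>
        simp [Matrix.cons_val_zero, Matrix.cons_val_one, Matrix.head_cons] <;> ring

theorem stmt11 (v : Fin 5 → Fin 3 → ℝ)
    (hpar : v 0 - v 1 + v 2 - v 3 = 0)
    (hnd1 : AffineIndependent ℝ ![v 2, v 0, v 1, v 4])
    (hnd2 : AffineIndependent ℝ ![v 0, v 2, v 3, v 4]) :
    -- dim V(K) = 6
    ∃ ψ : Fin 6 → ((Fin 3 → ℝ) × ℝ) × ((Fin 3 → ℝ) × ℝ),
      (∀ i, memVK v (ψ i)) ∧
      ∀ q, memVK v q → ∃! c : Fin 6 → ℝ, q = ∑ i, c i • ψ i := by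
  classical
  set u : Fin 3 → ℝ := v 2 - v 0 with hu_def
  set b : Fin 3 → ℝ := v 1 - v 0 with hb_def
  set a : Fin 3 → ℝ := v 4 - v 0 with ha_def
  -- membership helpers
  have hm : ∀ (j : Fin 5) (S : Set (Fin 3 → ℝ)), v j ∈ S → v j ∈ convexHull ℝ S :=
    fun j S h => subset_convexHull ℝ S h
  -- the parallelogram relation
  have hv3 : v 3 - v 0 = u - b := by
    funext i
    have := congrFun hpar i
    simp only [Pi.sub_apply, Pi.add_apply, Pi.zero_apply] at this ⊢
    simp only [hu_def, hb_def, Pi.sub_apply]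
    linarith
  refine ⟨psiV v, ?_, ?_⟩
  · -- each basis field is in V(K)
    intro i
    have base_sub1 : convexHull ℝ {v 0, v 1, v 2} ⊆ convexHull ℝ {v 0, v 1, v 2, v 3} := by
      apply convexHull_mono; intro x hx; simp only [Set.mem_insert_iff, Set.mem_singleton_iff] at hx ⊢; tauto
    have base_sub2 : convexHull ℝ {v 0, v 2, v 3} ⊆ convexHull ℝ {v 0, v 1, v 2, v 3} := by
      apply convexHull_mono; intro x hx; simp only [Set.mem_insert_iff, Set.mem_singleton_iff] at hx ⊢; tauto
    have hv0mem : v 0 ∈ convexHull ℝ {v 0, v 1, v 2, v 3} := hm 0 _ (by simp)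
    -- generic facts reused in all cases
    have face2 : ∀ p : (Fin 3 → ℝ) × ℝ, ∀ n, normalTo (convexHull ℝ {v 0, v 1, v 4}) n →
        ∃ k, ∀ x ∈ convexHull ℝ {v 0, v 1, v 4}, rtFld p x ⬝ᵥ n = k :=
      fun p n hn => ⟨rtFld p (v 0) ⬝ᵥ n, fun x hx => rt_eq p hn (hm 0 _ (by simp)) hx⟩
    have face3 : ∀ p : (Fin 3 → ℝ) × ℝ, ∀ n, normalTo (convexHull ℝ {v 1, v 2, v 4}) n →
        ∃ k, ∀ x ∈ convexHull ℝ {v 1, v 2, v 4}, rtFld p x ⬝ᵥ n = k :=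
      fun p n hn => ⟨rtFld p (v 1) ⬝ᵥ n, fun x hx => rt_eq p hn (hm 1 _ (by simp)) hx⟩
    have face4 : ∀ p : (Fin 3 → ℝ) × ℝ, ∀ n, normalTo (convexHull ℝ {v 2, v 3, v 4}) n →
        ∃ k, ∀ x ∈ convexHull ℝ {v 2, v 3, v 4}, rtFld p x ⬝ᵥ n = k :=
      fun p n hn => ⟨rtFld p (v 2) ⬝ᵥ n, fun x hx => rt_eq p hn (hm 2 _ (by simp)) hx⟩
    have face5 : ∀ p : (Fin 3 → ℝ) × ℝ, ∀ n, normalTo (convexHull ℝ {v 0, v 3, v 4}) n →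
        ∃ k, ∀ x ∈ convexHull ℝ {v 0, v 3, v 4}, rtFld p x ⬝ᵥ n = k :=
      fun p n hn => ⟨rtFld p (v 0) ⬝ᵥ n, fun x hx => rt_eq p hn (hm 0 _ (by simp)) hx⟩
    -- for equal pairs the interface & base conditions are easy
    have memdiag : ∀ p : (Fin 3 → ℝ) × ℝ, memVK v (p, p) := by
      intro p
      refine ⟨fun n _ x _ => rfl, face2 p, face3 p, face4 p, face5 p, fun n hn => ?_⟩
      exact ⟨rtFld p (v 0) ⬝ᵥ n,
        fun x hx => rt_eq p hn hv0mem (base_sub1 hx),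
        fun x hx => rt_eq p hn hv0mem (base_sub2 hx)⟩
    have humem : ∀ n, normalTo (convexHull ℝ {v 0, v 2, v 4}) n → u ⬝ᵥ n = 0 := by
      intro n hn
      have h := hn (v 2) (hm 2 _ (by simp)) (v 0) (hm 0 _ (by simp))
      rw [dotProduct_comm]; exact h
    have hubase : ∀ n, normalTo (convexHull ℝ {v 0, v 1, v 2, v 3}) n → u ⬝ᵥ n = 0 := by
      intro n hn
      have h := hn (v 2) (hm 2 _ (by simp)) (v 0) hv0mem
      rw [dotProduct_comm]; exact h
    fin_cases i
    · exact memdiag (![1,0,0], 0)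
    · exact memdiag (![0,1,0], 0)
    · exact memdiag (![0,0,1], 0)
    · exact memdiag (0, 1)
    · -- ψ₄ = ((u,0),(0,0))
      show memVK v ((v 2 - v 0, 0), (0, 0))
      refine ⟨?_, face2 _, face3 _, face4 _, face5 _, ?_⟩
      · intro n hn x hx
        have h0 : (v 2 - v 0) ⬝ᵥ n = 0 := humem n hn
        simp only [rtFld, zero_smul, add_zero, zero_add, add_dotProduct, zero_dotProduct]
        exact h0
      · intro n hn
        refine ⟨0, fun x hx => ?_, fun x hx => ?_⟩
        · have h0 : (v 2 - v 0) ⬝ᵥ n = 0 := hubase n hn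
          simp only [rtFld, zero_smul, add_zero, zero_add, add_dotProduct, zero_dotProduct]
          exact h0
        · simp [rtFld]
    · -- ψ₅ = ((-v0,1),(0,0))
      show memVK v ((-(v 0), 1), (0, 0))
      refine ⟨?_, face2 _, face3 _, face4 _, face5 _, ?_⟩
      · intro n hn x hx
        have h := hn x hx (v 0) (hm 0 _ (by simp))
        rw [dotProduct_sub] at h
        simp only [rtFld, one_smul, zero_smul, add_zero, zero_add, add_dotProduct,
          neg_dotProduct, zero_dotProduct]
        rw [dotProduct_comm x n, dotProduct_comm (v 0) n]
        linarith
      · intro n hn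
        refine ⟨0, fun x hx => ?_, fun x hx => ?_⟩
        · have h := hn x (base_sub1 hx) (v 0) hv0mem
          rw [dotProduct_sub] at h
          simp only [rtFld, one_smul, zero_smul, add_zero, zero_add, add_dotProduct,
            neg_dotProduct, zero_dotProduct]
          rw [dotProduct_comm x n, dotProduct_comm (v 0) n]
          linarith
        · simp [rtFld]
  · -- spanning with unique coefficients
    intro q hq
    obtain ⟨h1, _, _, _, _, h6⟩ := hq
    obtain ⟨⟨a1, c1⟩, a2, c2⟩ := q
    set w : Fin 3 → ℝ := a1 - a2 + (c1 - c2) • v 0 with hw_def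
    -- nondegeneracy: s ≠ 0
    have hs : u ⬝ᵥ crossP b a ≠ 0 := by
      intro hs0
      set M3 : Matrix (Fin 3) (Fin 3) ℝ := (Matrix.of ![u, b, a])ᵀ with hM3
      have hdet : M3.det = 0 := by
        rw [hM3, Matrix.det_transpose, Matrix.det_fin_three]
        simp only [crossP, dotProduct, Fin.sum_univ_three, Matrix.cons_val_zero,
          Matrix.cons_val_one, Matrix.head_cons, Matrix.cons_val_two, Matrix.tail_cons,
          Matrix.of_apply, Matrix.cons_val', Matrix.head_fin_const, Matrix.empty_val'] at hs0 ⊢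
        linear_combination hs0
      obtain ⟨cc, hcc0, hcc⟩ := (Matrix.exists_mulVec_eq_zero_iff).mpr hdet
      have hlin : cc 0 • u + cc 1 • b + cc 2 • a = 0 := by
        funext i
        have := congrFun hcc i
        simp only [Matrix.mulVec, dotProduct, Fin.sum_univ_three, hM3, Matrix.transpose_apply,
          Matrix.of_apply, Matrix.cons_val_zero, Matrix.cons_val_one, Matrix.head_cons,
          Matrix.cons_val_two, Matrix.tail_cons, Pi.zero_apply] at this
        simp only [Pi.add_apply, Pi.smul_apply, smul_eq_mul, Pi.zero_apply]
        linarith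
      have := affineIndependent_iff.mp hnd1 Finset.univ
        ![cc 0, -(cc 0 + cc 1 + cc 2), cc 1, cc 2] (by
          simp [Fin.sum_univ_four]; ring) (by
          have : cc 0 • v 2 + (-(cc 0 + cc 1 + cc 2)) • v 0 + cc 1 • v 1 + cc 2 • v 4 = 0 := by
            have h' := hlin
            simp only [hu_def, hb_def, ha_def, smul_sub] at h'
            funext i
            have := congrFun h' i
            simp only [Pi.add_apply, Pi.sub_apply, Pi.smul_apply, smul_eq_mul,
              Pi.zero_apply, Pi.neg_apply] at this ⊢
            linarith
          simpa [Fin.sum_univ_four] using this)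
      apply hcc0
      funext i
      fin_cases i
      · simpa using this 0 (Finset.mem_univ _)
      · simpa using this 2 (Finset.mem_univ _)
      · simpa using this 3 (Finset.mem_univ _)
    have hu0 : u ≠ 0 := by
      intro h
      exact hs (by rw [h, zero_dotProduct])
    obtain ⟨i0, hi0⟩ := Function.ne_iff.mp hu0
    rw [Pi.zero_apply] at hi0
    -- normal vectors
    have hNnormal : normalTo (convexHull ℝ {v 0, v 2, v 4}) (crossP u a) := by
      apply normalTo_hull (p₀ := v 0)
      intro p hp
      simp only [Set.mem_insert_iff, Set.mem_singleton_iff] at hp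
      rcases hp with rfl | rfl | rfl
      · simp
      · have : v 2 - v 0 = u := rfl
        rw [this]
        simp [crossP, dotProduct, Fin.sum_univ_three]; ring
      · have : v 4 - v 0 = a := rfl
        rw [this]
        simp [crossP, dotProduct, Fin.sum_univ_three]; ring
    have hMnormal : normalTo (convexHull ℝ {v 0, v 1, v 2, v 3}) (crossP u b) := by
      apply normalTo_hull (p₀ := v 0)
      intro p hp
      simp only [Set.mem_insert_iff, Set.mem_singleton_iff] at hp
      have hcu : crossP u b ⬝ᵥ u = 0 := by
        simp [crossP, dotProduct, Fin.sum_univ_three]; ring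
      have hcb : crossP u b ⬝ᵥ b = 0 := by
        simp [crossP, dotProduct, Fin.sum_univ_three]; ring
      rcases hp with rfl | rfl | rfl | rfl
      · simp
      · exact hcb
      · exact hcu
      · rw [hv3, dotProduct_sub, hcu, hcb, sub_self]
    -- interface condition gives w ⬝ N = 0
    have hwN : w ⬝ᵥ crossP u a = 0 := by
      have h := h1 (crossP u a) hNnormal (v 0) (hm 0 _ (by simp))
      simp only [rtFld, add_dotProduct, smul_dotProduct, smul_eq_mul] at h
      simp only [hw_def, add_dotProduct, sub_dotProduct, smul_dotProduct, smul_eq_mul]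
      linarith
    -- base condition gives w ⬝ M = 0
    have hwM : w ⬝ᵥ crossP u b = 0 := by
      obtain ⟨k, hk1, hk2⟩ := h6 (crossP u b) hMnormal
      have e1 := hk1 (v 0) (hm 0 _ (by simp))
      have e2 := hk2 (v 0) (hm 0 _ (by simp))
      simp only [rtFld, add_dotProduct, smul_dotProduct, smul_eq_mul] at e1 e2
      simp only [hw_def, add_dotProduct, sub_dotProduct, smul_dotProduct, smul_eq_mul]
      linarith
    have hkey := tripleKey u b a w hwN hwM
    set t : ℝ := (w ⬝ᵥ crossP b a) / (u ⬝ᵥ crossP b a) with ht_def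
    have hw : w = t • u := by
      have := congrArg (fun z => (u ⬝ᵥ crossP b a)⁻¹ • z) hkey
      simp only [smul_smul, inv_mul_cancel₀ hs, one_smul] at this
      rw [this, ht_def, div_eq_inv_mul, mul_smul]
    refine ⟨![a2 0, a2 1, a2 2, c2, t, c1 - c2], ?_, ?_⟩
    · show ((a1, c1), (a2, c2)) = ∑ i, ![a2 0, a2 1, a2 2, c2, t, c1 - c2] i • psiV v i
      rw [sum_psiV]
      have ha2 : (![a2 0, a2 1, a2 2] : Fin 3 → ℝ) = a2 := by
        funext j; fin_cases j <;> rfl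
      refine Prod.ext_iff.mpr ⟨Prod.ext_iff.mpr ⟨?_, ?_⟩, Prod.ext_iff.mpr ⟨?_, ?_⟩⟩
      · show a1 = ![a2 0, a2 1, a2 2] + t • (v 2 - v 0) - (c1 - c2) • v 0
        have hw' : a1 - a2 + (c1 - c2) • v 0 = t • (v 2 - v 0) := hw
        rw [ha2, ← hw']
        abel
      · show c1 = c2 + (c1 - c2); ring
      · show a2 = ![a2 0, a2 1, a2 2]; exact ha2.symm
      · rfl
    · intro y hy
      rw [sum_psiV] at hy
      simp only [Prod.mk.injEq] at hy
      obtain ⟨⟨e1, e2⟩, e3, e4⟩ := hy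
      have hy0 : y 0 = a2 0 := by rw [e3]; rfl
      have hy1 : y 1 = a2 1 := by rw [e3]; rfl
      have hy2 : y 2 = a2 2 := by rw [e3]; rfl
      have hy5 : y 5 = c1 - c2 := by rw [e2, e4]; ring
      have hy4 : y 4 = t := by
        have h41 : y 4 • u = t • u := by
          rw [← hw, hw_def, e1, ← e3, ← hy5, ← hu_def]
          abel
        have := congrFun h41 i0
        simp only [Pi.smul_apply, smul_eq_mul] at this
        exact mul_right_cancel₀ hi0 this
      funext i
      fin_cases i
      · exact hy0
      · exact hy1
      · exact hy2
      · exact e4.symm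
      · exact hy4
      · exact hy5
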